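/- arXiv:2002.11766 — 3 statements merged into one kernel-verified Lean document; each statement's English description precedes it below -/
import Mathlib

section
/- Let T be a tree, let G be a P_1-closed subgroup of Aut(T), and let H be a subgroup of G containing the pointwise stabilizer G_{(F)} of some finite set F of vertices. Suppose there exist g ∈ H and a vertex x with d(x, g x) > 0 and d(x, g² x) = 2·d(x, g x) (so g is hyperbolic and x lies on its axis), and let y be a vertex adjacent to x with d(y, g x) = d(x, g x) − 1 (so the arc (x,y) lies on the axis of g). Then the arc stabilizer G_{(x,y)} = {h ∈ G : h x = x and h y = y} is contained in H. -/
/-!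
Since `h` fixes the arc `(x, y)`, it is the product of two automorphisms: one acts as `h` on the
half-tree of `x` and trivially on the half-tree of `y`, the other the other way round. Near every
vertex each factor agrees with `h` or with the identity, so both lie in the `P₁`-closed group `G`.
Because `(x, y)` lies on the axis of `g`, the images of the half-tree of `x` under `gⁿ`, and those
of the half-tree of `y` under `g⁻ⁿ`, exhaust the tree as `n` grows. Hence each factor has a
conjugate by a power of `g` that fixes the finite set `F`; that conjugate lies in `H`, and so does
the factor.
-/

open SimpleGraph

variable {V : Type*}

/-- The automorphism group of a simple graph `T`, as a subgroup of `Equiv.Perm V`. -/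
def SimpleGraph.autGroup (T : SimpleGraph V) : Subgroup (Equiv.Perm V) where
  carrier := {g : Equiv.Perm V | ∀ u v : V, T.Adj (g u) (g v) ↔ T.Adj u v}
  one_mem' := by intro u v; simp
  mul_mem' := by
    intro a b ha hb u v
    simpa using (ha (b u) (b v)).trans (hb u v)
  inv_mem' := by
    intro a ha u v
    simpa using (ha (a⁻¹ u) (a⁻¹ v)).symm

/-- The `P_k`-closure of a set `G` of automorphisms of `T`: all automorphisms `g` such that
for every vertex `v` and every finite set `X` of vertices at distance at most `k` from `v`,
some element of `G` agrees with `g` on `X`. -/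
def pClosure (T : SimpleGraph V) (k : ℕ) (G : Set ↥(T.autGroup)) : Set ↥(T.autGroup) :=
  {g | ∀ (v : V) (X : Finset V), (∀ x ∈ X, T.dist v x ≤ k) →
    ∃ h ∈ G, ∀ x ∈ X, g.val x = h.val x}

namespace SimpleGraph

theorem Walk.dist_add_dist_of_mem_support {G : SimpleGraph V} {u v m : V} {p : G.Walk u v}
    (hp : p.length = G.dist u v) (hm : m ∈ p.support) :
    G.dist u m + G.dist m v = G.dist u v := by
  classical
  have hlen := congrArg Walk.length (p.take_spec hm)
  rw [Walk.length_append] at hlen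
  have h₁ := dist_le (p.takeUntil m hm)
  have h₂ := dist_le (p.dropUntil m hm)
  have h₃ := (p.takeUntil m hm).reachable.dist_triangle_left v
  omega

variable {T : SimpleGraph V}

def halfTree (T : SimpleGraph V) (x y : V) : Set V :=
  {v | T.dist v x < T.dist v y}

theorem mem_halfTree {x y v : V} : v ∈ T.halfTree x y ↔ T.dist v x < T.dist v y :=
  Iff.rfl

namespace IsTree

variable (hT : T.IsTree) {x y u v : V}
include hT

theorem dist_eq_add_one_of_mem_halfTree (hxy : T.Adj x y) (hv : v ∈ T.halfTree x y) :
    T.dist v y = T.dist v x + 1 := by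
  have := hT.dist_eq_dist_add_one_of_adj v hxy
  rw [mem_halfTree] at hv
  omega

theorem mem_halfTree_swap_of_notMem (hxy : T.Adj x y) (hv : v ∉ T.halfTree x y) :
    v ∈ T.halfTree y x := by
  have := hT.dist_eq_dist_add_one_of_adj v hxy
  rw [mem_halfTree] at hv ⊢
  omega

/-- A geodesic from `u` to `v` crosses the arc `(x, y)`, since every edge of a tree is a bridge. -/
theorem dist_eq_of_mem_halfTree (hxy : T.Adj x y) (hu : u ∈ T.halfTree x y)
    (hv : v ∈ T.halfTree y x) : T.dist u v = T.dist u x + 1 + T.dist y v := by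
  have hu' := hT.dist_eq_add_one_of_mem_halfTree hxy hu
  have hv' := hT.dist_eq_add_one_of_mem_halfTree hxy.symm hv
  obtain ⟨p, hp⟩ := hT.connected.exists_walk_length_eq_dist u v
  obtain ⟨q, hq⟩ := hT.connected.exists_walk_length_eq_dist x u
  obtain ⟨r, hr⟩ := hT.connected.exists_walk_length_eq_dist v y
  have hyq : y ∉ q.support := fun hy => by
    have := Walk.dist_add_dist_of_mem_support hq hy
    rw [dist_eq_one_iff_adj.mpr hxy, dist_comm (u := x), dist_comm (u := y)] at this
    omega
  have hxr : x ∉ r.support := fun hx => by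
    have := Walk.dist_add_dist_of_mem_support hr hx
    rw [dist_eq_one_iff_adj.mpr hxy] at this
    omega
  have hcross := isBridge_iff_forall_walk_mem_edges.mp
    (isAcyclic_iff_forall_adj_isBridge.mp hT.isAcyclic hxy) ((q.append p).append r)
  simp only [Walk.edges_append, List.mem_append] at hcross
  rcases hcross with (hq' | hp') | hr'
  · exact absurd (q.snd_mem_support_of_mem_edges hq') hyq
  · have := Walk.dist_add_dist_of_mem_support hp (p.snd_mem_support_of_mem_edges hp')
    omega
  · exact absurd (r.fst_mem_support_of_mem_edges hr') hxr

theorem eq_of_adj_of_mem_halfTree (hxy : T.Adj x y) (huv : T.Adj u v)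
    (hu : u ∈ T.halfTree x y) (hv : v ∈ T.halfTree y x) : u = x ∧ v = y := by
  have := hT.dist_eq_of_mem_halfTree hxy hu hv
  rw [dist_eq_one_iff_adj.mpr huv] at this
  exact ⟨hT.connected.dist_eq_zero_iff.mp (by omega),
    (hT.connected.dist_eq_zero_iff.mp (by omega)).symm⟩

theorem mem_halfTree_of_dist_lt (hxy : T.Adj x y) (hu : u ∈ T.halfTree x y)
    (hv : T.dist u v < T.dist u x) : v ∈ T.halfTree x y := by
  by_contra hv'
  have := hT.dist_eq_of_mem_halfTree hxy hu (hT.mem_halfTree_swap_of_notMem hxy hv')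
  omega

end IsTree

section autGroup

variable (a : T.autGroup) {x y : V}

theorem autGroup.adj_apply_iff (u v : V) : T.Adj (a.val u) (a.val v) ↔ T.Adj u v :=
  a.prop u v

theorem autGroup.edist_apply_le (u v : V) : T.edist (a.val u) (a.val v) ≤ T.edist u v := by
  let f : T →g T := ⟨a.val, (autGroup.adj_apply_iff a _ _).mpr⟩
  rw [edist_eq_sInf (u := u)]
  refine le_sInf ?_
  rintro _ ⟨p, rfl⟩
  exact (edist_le (p.map f)).trans_eq (by rw [Walk.length_map])

theorem autGroup.dist_apply (u v : V) : T.dist (a.val u) (a.val v) = T.dist u v := by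
  have h := autGroup.edist_apply_le a⁻¹ (a.val u) (a.val v)
  simp only [InvMemClass.coe_inv, Equiv.Perm.coe_inv, Equiv.symm_apply_apply] at h
  rw [dist, dist, le_antisymm (autGroup.edist_apply_le a u v) h]

theorem autGroup.apply_inv_apply (v : V) : a.val ((a⁻¹).val v) = v :=
  a.val.apply_symm_apply v

theorem autGroup.apply_mem_halfTree_iff (v : V) :
    a.val v ∈ T.halfTree (a.val x) (a.val y) ↔ v ∈ T.halfTree x y := by
  simp only [mem_halfTree, autGroup.dist_apply]

end autGroup

open Equiv.Perm in
theorem ofSubtype_subtypePerm_mem_autGroup {h : T.autGroup} {S : Set V}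
    [DecidablePred (· ∈ S)]
    (hS : ∀ v, h.val v ∈ S ↔ v ∈ S)
    (hbd : ∀ u v, T.Adj u v → u ∈ S → v ∉ S → h.val u = u ∧ h.val v = v) :
    Equiv.Perm.ofSubtype (h.val.subtypePerm hS) ∈ T.autGroup := by
  have cross (u v : V) (hu : u ∈ S) (hv : v ∉ S) : T.Adj (h.val u) v ↔ T.Adj u v := by
    constructor
    · intro huv
      rwa [h.val.injective (hbd _ v huv ((hS u).mpr hu) hv).1] at huv
    · intro huv
      rwa [(hbd u v huv hu hv).1]
  intro u v
  by_cases hu : u ∈ S <;> by_cases hv : v ∈ S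
  · rw [ofSubtype_subtypePerm_of_mem hS hu, ofSubtype_subtypePerm_of_mem hS hv]
    exact autGroup.adj_apply_iff h u v
  · rw [ofSubtype_subtypePerm_of_mem hS hu, ofSubtype_subtypePerm_of_not_mem hS hv]
    exact cross u v hu hv
  · rw [ofSubtype_subtypePerm_of_not_mem hS hu, ofSubtype_subtypePerm_of_mem hS hv, adj_comm,
      cross v u hv hu, adj_comm]
  · rw [ofSubtype_subtypePerm_of_not_mem hS hu, ofSubtype_subtypePerm_of_not_mem hS hv]

open Classical in
noncomputable def autGroup.restrict (h : T.autGroup) (S : Set V)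
    (hS : ∀ v, h.val v ∈ S ↔ v ∈ S)
    (hbd : ∀ u v, T.Adj u v → u ∈ S → v ∉ S → h.val u = u ∧ h.val v = v) : T.autGroup :=
  ⟨Equiv.Perm.ofSubtype (h.val.subtypePerm hS), ofSubtype_subtypePerm_mem_autGroup hS hbd⟩

section restrict

variable {h : T.autGroup} {S : Set V} {hS : ∀ v, h.val v ∈ S ↔ v ∈ S}
  {hbd : ∀ u v, T.Adj u v → u ∈ S → v ∉ S → h.val u = u ∧ h.val v = v} {v : V}

theorem autGroup.restrict_apply_of_mem (hv : v ∈ S) :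
    (autGroup.restrict h S hS hbd).val v = h.val v := by
  classical
  exact Equiv.Perm.ofSubtype_subtypePerm_of_mem hS hv

theorem autGroup.restrict_apply_of_notMem (hv : v ∉ S) :
    (autGroup.restrict h S hS hbd).val v = v := by
  classical
  exact Equiv.Perm.ofSubtype_subtypePerm_of_not_mem hS hv

theorem autGroup.restrict_mul_restrict_compl :
    autGroup.restrict h S hS hbd * autGroup.restrict h Sᶜ (fun v => (hS v).not)
      (fun u v huv hu hv => (hbd v u huv.symm (not_not.mp hv) hu).symm) = h := by
  refine Subtype.ext (Equiv.ext fun v => ?_)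
  show (autGroup.restrict h S hS hbd).val ((autGroup.restrict h Sᶜ _ _).val v) = h.val v
  by_cases hv : v ∈ S
  · rw [autGroup.restrict_apply_of_notMem (S := Sᶜ) (not_not.mpr hv),
      autGroup.restrict_apply_of_mem hv]
  · rw [autGroup.restrict_apply_of_mem (S := Sᶜ) hv,
      autGroup.restrict_apply_of_notMem (mt (hS v).mp hv)]

theorem autGroup.restrict_mem_of_pClosure_eq (hT : T.Connected) {G : Subgroup T.autGroup}
    (hG : pClosure T 1 (G : Set T.autGroup) = G) (hh : h ∈ G) :
    autGroup.restrict h S hS hbd ∈ G := by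
  have adj_of_dist_le : ∀ u w, T.dist u w ≤ 1 → u ≠ w → T.Adj u w := fun u w huw hne =>
    dist_eq_one_iff_adj.mp (le_antisymm huw (hT.pos_dist_of_ne hne))
  rw [← SetLike.mem_coe, ← hG]
  intro w X hX
  by_cases hw : w ∈ S
  · refine ⟨h, hh, fun u hu => ?_⟩
    by_cases huS : u ∈ S
    · exact autGroup.restrict_apply_of_mem huS
    · rw [autGroup.restrict_apply_of_notMem huS]
      exact (hbd w u (adj_of_dist_le w u (hX u hu) (ne_of_mem_of_not_mem hw huS)) hw
        huS).2.symm
  · refine ⟨1, G.one_mem, fun u hu => ?_⟩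
    by_cases huS : u ∈ S
    · rw [autGroup.restrict_apply_of_mem huS]
      exact (hbd u w (adj_of_dist_le w u (hX u hu)
        (ne_of_mem_of_not_mem huS hw).symm).symm huS hw).1
    · exact autGroup.restrict_apply_of_notMem huS

end restrict

theorem autGroup.mem_of_fixes_inv_apply {G H : Subgroup T.autGroup} {F : Set V} (hHG : H ≤ G)
    (hF : ∀ g ∈ G, (∀ v ∈ F, g.val v = v) → g ∈ H) {a k : T.autGroup} (ha : a ∈ H) (hk : k ∈ G)
    (hfix : ∀ v ∈ F, k.val ((a⁻¹).val v) = (a⁻¹).val v) : k ∈ H := by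
  have hconj : a * k * a⁻¹ ∈ H := by
    refine hF _ (G.mul_mem (G.mul_mem (hHG ha) hk) (G.inv_mem (hHG ha))) fun v hv => ?_
    change a.val (k.val ((a⁻¹).val v)) = v
    rw [hfix v hv, autGroup.apply_inv_apply]
  convert H.mul_mem (H.mul_mem (H.inv_mem ha) hconj) ha using 1
  group

/-- The arc `(x, y)` lies on the axis of `g` and points in the direction of translation:
`g x` lies beyond `(x, y)`, and `x` lies behind `(g x, g y)`. -/
def ArcOnAxis (g : T.autGroup) (x y : V) : Prop :=
  T.Adj x y ∧ g.val x ∈ T.halfTree y x ∧ x ∈ T.halfTree (g.val x) (g.val y)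

theorem arcOnAxis_of_dist_eq (hT : T.IsTree) {g : T.autGroup} {x y : V} (hxy : T.Adj x y)
    (hx1 : 0 < T.dist x (g.val x))
    (hx2 : T.dist x (g.val (g.val x)) = 2 * T.dist x (g.val x))
    (hy : T.dist y (g.val x) = T.dist x (g.val x) - 1) : ArcOnAxis g x y := by
  refine ⟨hxy, ?_, ?_⟩
  · rw [mem_halfTree, dist_comm, dist_comm (u := g.val x) (v := x)]
    omega
  · rw [mem_halfTree]
    -- otherwise `g y` is closer to `x` than `g x`, and `d(x, g² x) ≤ d(x, g y) + d(y, g x) < 2 ℓ`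
    by_contra hlt
    have h₁ := hT.dist_eq_dist_add_one_of_adj x ((autGroup.adj_apply_iff g x y).mpr hxy)
    have h₂ : T.dist x (g.val (g.val x)) ≤
        T.dist x (g.val y) + T.dist (g.val y) (g.val (g.val x)) := hT.connected.dist_triangle
    rw [autGroup.dist_apply] at h₂
    omega

namespace ArcOnAxis

variable (hT : T.IsTree) {g : T.autGroup} {x y : V} (hg : ArcOnAxis g x y)
include hT hg

theorem dist_snd_apply_fst : T.dist y (g.val x) + 1 = T.dist x (g.val x) := by
  have := hT.dist_eq_add_one_of_mem_halfTree hg.1.symm hg.2.1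
  rwa [dist_comm, dist_comm (u := g.val x) (v := y), eq_comm] at this

theorem dist_fst_apply_snd : T.dist x (g.val y) = T.dist x (g.val x) + 1 :=
  hT.dist_eq_add_one_of_mem_halfTree ((autGroup.adj_apply_iff g x y).mpr hg.1) hg.2.2

theorem dist_snd_apply_snd : T.dist y (g.val y) = T.dist x (g.val x) := by
  have h₁ := dist_snd_apply_fst hT hg
  have h₂ := dist_fst_apply_snd hT hg
  have h₃ : T.dist y (g.val y) ≤ T.dist y (g.val x) + T.dist (g.val x) (g.val y) :=
    hT.connected.dist_triangle
  have h₄ : T.dist x (g.val y) ≤ T.dist x y + T.dist y (g.val y) := hT.connected.dist_triangle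
  rw [autGroup.dist_apply, dist_eq_one_iff_adj.mpr hg.1] at h₃
  rw [dist_eq_one_iff_adj.mpr hg.1] at h₄
  omega

theorem inv : ArcOnAxis g⁻¹ y x := by
  have h₁ := dist_snd_apply_fst hT hg
  have h₂ := dist_fst_apply_snd hT hg
  have h₃ := dist_snd_apply_snd hT hg
  refine ⟨hg.1.symm, ?_, ?_⟩
  · rw [← autGroup.apply_mem_halfTree_iff g, autGroup.apply_inv_apply, mem_halfTree]
    omega
  · rw [← autGroup.apply_mem_halfTree_iff g, autGroup.apply_inv_apply, autGroup.apply_inv_apply,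
      mem_halfTree, dist_comm, dist_comm (u := g.val y) (v := x)]
    omega

theorem dist_pow (n : ℕ) : T.dist x ((g ^ n).val x) = n * T.dist x (g.val x) ∧
    x ∈ T.halfTree ((g ^ n).val x) ((g ^ n).val y) := by
  have h₁ := dist_snd_apply_fst hT hg
  have h₂ := dist_fst_apply_snd hT hg
  have h₃ := dist_snd_apply_snd hT hg
  obtain ⟨hxy, hgx, -⟩ := hg
  have hgy : g.val y ∈ T.halfTree y x := by
    rw [mem_halfTree, dist_comm, dist_comm (u := g.val y) (v := x)]
    omega
  induction n with
  | zero => simp [mem_halfTree, dist_eq_one_iff_adj.mpr hxy]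
  | succ n ih =>
    obtain ⟨ihd, ihx⟩ := ih
    have happ : ∀ v, (g ^ (n + 1)).val v = (g ^ n).val (g.val v) := fun v => by
      rw [pow_succ]; rfl
    have hadj := (autGroup.adj_apply_iff (g ^ n) x y).mpr hxy
    -- the arc `(gⁿ x, gⁿ y)` separates `x` from `gⁿ⁺¹ x` and `gⁿ⁺¹ y`
    have hbx := hT.dist_eq_of_mem_halfTree hadj ihx
      ((autGroup.apply_mem_halfTree_iff (g ^ n) _).mpr hgx)
    have hby := hT.dist_eq_of_mem_halfTree hadj ihx
      ((autGroup.apply_mem_halfTree_iff (g ^ n) _).mpr hgy)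
    rw [autGroup.dist_apply] at hbx hby
    rw [happ, happ, mem_halfTree, hbx, hby, ihd, add_mul, one_mul]
    omega

theorem inv_pow_apply_mem_halfTree {n : ℕ} {v : V} (hv : T.dist x v < n * T.dist x (g.val x)) :
    ((g ^ n)⁻¹).val v ∈ T.halfTree x y := by
  obtain ⟨hd, hx⟩ := dist_pow hT hg n
  have hadj := (autGroup.adj_apply_iff (g ^ n) x y).mpr hg.1
  rw [← autGroup.apply_mem_halfTree_iff (g ^ n), autGroup.apply_inv_apply]
  exact hT.mem_halfTree_of_dist_lt hadj hx (hd ▸ hv)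

end ArcOnAxis

end SimpleGraph

/-- Proposition: if an open subgroup `H` of a `P_1`-closed group `G ≤ Aut(T)` (i.e. `H`
contains the pointwise stabilizer in `G` of a finite set `F` of vertices) contains a
hyperbolic element `g`, then `H` contains the `G`-stabilizer of every arc `(x,y)`
along the axis of `g`. -/
theorem arcStabilizer_on_axis_le
    (T : SimpleGraph V) (hT : T.IsTree) (G : Subgroup ↥(T.autGroup))
    (hG : pClosure T 1 (G : Set ↥(T.autGroup)) = (G : Set ↥(T.autGroup)))
    (H : Subgroup ↥(T.autGroup)) (hHG : H ≤ G)
    (F : Finset V) (hF : ∀ g ∈ G, (∀ v ∈ F, g.val v = v) → g ∈ H)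
    (g : ↥(T.autGroup)) (hgH : g ∈ H) (x : V)
    (hx1 : 0 < T.dist x (g.val x))
    (hx2 : T.dist x (g.val (g.val x)) = 2 * T.dist x (g.val x))
    (y : V) (hadj : T.Adj x y)
    (hy : T.dist y (g.val x) = T.dist x (g.val x) - 1) :
    ∀ h ∈ G, h.val x = x → h.val y = y → h ∈ H := by
  intro h hhG hhx hhy
  have haxis := arcOnAxis_of_dist_eq hT hadj hx1 hx2 hy
  have hS (v : V) : h.val v ∈ T.halfTree x y ↔ v ∈ T.halfTree x y := by
    simpa only [hhx, hhy] using autGroup.apply_mem_halfTree_iff h (x := x) (y := y) v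
  have hbd (u v : V) (huv : T.Adj u v) (hu : u ∈ T.halfTree x y) (hv : v ∉ T.halfTree x y) :
      h.val u = u ∧ h.val v = v := by
    obtain ⟨rfl, rfl⟩ :=
      hT.eq_of_adj_of_mem_halfTree hadj huv hu (hT.mem_halfTree_swap_of_notMem hadj hv)
    exact ⟨hhx, hhy⟩
  have hℓ : T.dist y ((g⁻¹).val y) = T.dist x (g.val x) := by
    rw [← autGroup.dist_apply g, autGroup.apply_inv_apply, dist_comm]
    exact haxis.dist_snd_apply_snd hT
  obtain ⟨N, hN⟩ : ∃ N : ℕ, ∀ v ∈ F, T.dist x v + T.dist y v < N * T.dist x (g.val x) :=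
    ⟨F.sup (fun v => T.dist x v + T.dist y v) + 1, fun v hv =>
      (Nat.lt_succ_of_le (F.le_sup (f := fun v => T.dist x v + T.dist y v) hv)).trans_le
        (Nat.le_mul_of_pos_right _ hx1)⟩
  rw [← autGroup.restrict_mul_restrict_compl (hS := hS) (hbd := hbd)]
  refine H.mul_mem ?_ ?_
  · refine autGroup.mem_of_fixes_inv_apply hHG hF (H.pow_mem (H.inv_mem hgH) N)
      (autGroup.restrict_mem_of_pClosure_eq hT.connected hG hhG)
      fun v hv => autGroup.restrict_apply_of_notMem fun hmem => ?_
    have hv' := (haxis.inv hT).inv_pow_apply_mem_halfTree hT (n := N) (v := v)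
      (by rw [hℓ]; have := hN v hv; omega)
    exact lt_asymm (mem_halfTree.mp hmem) (mem_halfTree.mp hv')
  · refine autGroup.mem_of_fixes_inv_apply hHG hF (H.pow_mem hgH N)
      (autGroup.restrict_mem_of_pClosure_eq hT.connected hG hhG)
      fun v hv => autGroup.restrict_apply_of_notMem (not_not.mpr ?_)
    exact haxis.inv_pow_apply_mem_halfTree hT (by have := hN v hv; omega)
end

section
/- Let T be a tree, let G be a subgroup of Aut(T), let (x,y) be an arc of T and let B be a nonempty bounded set of vertices of T. Let E = {g x : g ∈ G} ∪ {g y : g ∈ G} and let S be the convex hull of E, i.e., the set of vertices u such that d(e₁,u) + d(u,e₂) = d(e₁,e₂) for some e₁, e₂ ∈ E. Suppose every vertex of S has at least two neighbors in S (S has no leaves). Then there exists g ∈ G such that 0 < d(g y, B) < d(g x, B), where d(w,B) denotes the minimum of d(w,b) over b ∈ B. -/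
open SimpleGraph

variable {V : Type*}

/-- The union of the `G`-orbits of the two endpoints `x`, `y` of an arc. -/
def orbitEnds (T : SimpleGraph V) (G : Subgroup ↥(T.autGroup)) (x y : V) : Set V :=
  {w : V | ∃ g ∈ G, g.val x = w} ∪ {w : V | ∃ g ∈ G, g.val y = w}

/-- The convex hull of a set `E` of vertices: vertices lying on a geodesic between two
points of `E`. -/
def convexHullSet (T : SimpleGraph V) (E : Set V) : Set V :=
  {u : V | ∃ e₁ ∈ E, ∃ e₂ ∈ E, T.dist e₁ u + T.dist u e₂ = T.dist e₁ e₂}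


variable {T : SimpleGraph V}

private lemma tree_path_length (hT : T.IsTree) {a b : V} (p : T.Walk a b) (hp : p.IsPath) :
    p.length = T.dist a b := by
  obtain ⟨q, hq, hq'⟩ := hT.isConnected.exists_path_of_dist a b
  rw [(hT.existsUnique_path a b).unique hp hq, hq']

private lemma adj_dist {u v : V} (h : T.Adj u v) : T.dist u v = 1 :=
  SimpleGraph.dist_eq_one_iff_adj.mpr h

/-- Dichotomy: distances to the two ends of an edge differ by exactly one. -/
private lemma tree_dich (hT : T.IsTree) {u v : V} (huv : T.Adj u v) (w : V) :
    T.dist w u = T.dist w v + 1 ∨ T.dist w v = T.dist w u + 1 := by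
  classical
  obtain ⟨q, hq, hq'⟩ := hT.isConnected.exists_path_of_dist w v
  by_cases hu : u ∈ q.support
  · right
    have h1 := tree_path_length hT (q.takeUntil u hu) (hq.takeUntil hu)
    have h2 := tree_path_length hT (q.dropUntil u hu) (hq.dropUntil hu)
    have h3 : (q.takeUntil u hu).length + (q.dropUntil u hu).length = q.length := by
      rw [← Walk.length_append, Walk.take_spec q hu]
    have h4 : T.dist u v = 1 := adj_dist huv
    omega
  · left
    have hc : (Walk.cons huv q.reverse).IsPath := by
      rw [Walk.cons_isPath_iff]
      refine ⟨hq.reverse, ?_⟩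
      simpa using hu
    have := tree_path_length hT (Walk.cons huv q.reverse).reverse hc.reverse
    simp [Walk.length_reverse] at this
    omega

/-- There is a neighbour one step closer to `b`. -/
private lemma exists_toward (hT : T.IsTree) {a b : V} (hab : a ≠ b) :
    ∃ c, T.Adj a c ∧ T.dist c b + 1 = T.dist a b := by
  obtain ⟨p, hp, hl⟩ := hT.isConnected.exists_path_of_dist a b
  cases p with
  | nil => exact absurd rfl hab
  | cons h q =>
    refine ⟨_, h, ?_⟩
    have := tree_path_length hT q hp.of_cons
    simp only [Walk.length_cons] at hl
    omega

/-- Uniqueness of the neighbour towards `b`. -/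
private lemma toward_unique (hT : T.IsTree) {a b c₁ c₂ : V}
    (h₁ : T.Adj a c₁) (h₂ : T.Adj a c₂)
    (d₁ : T.dist c₁ b + 1 = T.dist a b) (d₂ : T.dist c₂ b + 1 = T.dist a b) :
    c₁ = c₂ := by
  obtain ⟨p₁, hp₁, hl₁⟩ := hT.isConnected.exists_path_of_dist c₁ b
  obtain ⟨p₂, hp₂, hl₂⟩ := hT.isConnected.exists_path_of_dist c₂ b
  have w₁ : (Walk.cons h₁ p₁).IsPath := by
    apply Walk.isPath_of_length_eq_dist
    simp [Walk.length_cons, hl₁]; omega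
  have w₂ : (Walk.cons h₂ p₂).IsPath := by
    apply Walk.isPath_of_length_eq_dist
    simp [Walk.length_cons, hl₂]; omega
  have := (hT.existsUnique_path a b).unique w₁ w₂
  have hs := congrArg Walk.support this
  simp only [Walk.support_cons] at hs
  have hs' : p₁.support = p₂.support := by
    injection hs
  rw [p₁.support_eq_cons, p₂.support_eq_cons] at hs'
  injection hs'

/-- Crossing lemma: if `a` is on the `v`-side and `b` on the `u`-side of the edge `(u,v)`,
then `d a b = d a v + 1 + d u b`. -/
private lemma tree_cross (hT : T.IsTree) {u v : V} (huv : T.Adj u v) :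
    ∀ {a b : V}, T.dist a u = T.dist a v + 1 → T.dist b v = T.dist b u + 1 →
      T.dist a b = T.dist a v + 1 + T.dist u b := by
  have conn := hT.isConnected
  suffices H : ∀ (n : ℕ) (a b : V), T.dist a v = n →
      T.dist a u = T.dist a v + 1 → T.dist b v = T.dist b u + 1 →
      T.dist a b = T.dist a v + 1 + T.dist u b by
    intro a b ha hb; exact H _ a b rfl ha hb
  intro n
  induction n using Nat.strong_induction_on with
  | _ n IH =>
    intro a b hn ha hb
    by_cases hav : a = v
    · have h0 : T.dist a v = 0 := by rw [hav]; exact SimpleGraph.dist_self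
      have h1 : T.dist a b = T.dist b v := by rw [hav]; exact SimpleGraph.dist_comm ..
      have h2 : T.dist u b = T.dist b u := SimpleGraph.dist_comm ..
      omega
    · -- a ≠ v, take the neighbour of a towards v
      have hne : T.dist a v ≠ 0 := by
        intro h; exact hav ((conn.dist_eq_zero_iff).mp h)
      obtain ⟨c, hac, hc⟩ := exists_toward hT hav
      -- c is on the v-side
      have hcside : T.dist c u = T.dist c v + 1 := by
        rcases tree_dich hT huv c with h | h
        · exact h
        · exfalso
          have t : T.dist a u ≤ T.dist a c + T.dist c u := conn.dist_triangle
          have hac1 : T.dist a c = 1 := adj_dist hac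
          omega
      have hIH : T.dist c b = T.dist c v + 1 + T.dist u b := by
        exact IH (T.dist c v) (by omega) c b rfl hcside hb
      -- now b is further from a than from c
      rcases tree_dich hT hac b with h | h
      · -- T.dist b a = T.dist b c + 1 : good case
        have c1 : T.dist b a = T.dist a b := SimpleGraph.dist_comm ..
        have c2 : T.dist b c = T.dist c b := SimpleGraph.dist_comm ..
        omega
      · -- bad case : T.dist b c = T.dist b a + 1
        exfalso
        by_cases hcv : c = v
        · rw [hcv] at h
          -- toward-b neighbours of v : a and u
          have hu' : T.dist u b + 1 = T.dist v b := by
            have := SimpleGraph.dist_comm (G := T) (u := b) (v := v)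
            have := SimpleGraph.dist_comm (G := T) (u := b) (v := u)
            omega
          have ha' : T.dist a b + 1 = T.dist v b := by
            have := SimpleGraph.dist_comm (G := T) (u := b) (v := v)
            have := SimpleGraph.dist_comm (G := T) (u := b) (v := a)
            omega
          have hva : T.Adj v a := by rw [← hcv]; exact hac.symm
          have hau := toward_unique hT hva huv.symm ha' hu'
          rw [hau] at ha
          have h0 : T.dist u u = 0 := SimpleGraph.dist_self
          omega
        · obtain ⟨c₂, hcc₂, hc₂⟩ := exists_toward hT hcv
          -- c₂ is towards b from c as well
          have hc₂b : T.dist c₂ b + 1 = T.dist c b := by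
            have t1 : T.dist c₂ b ≤ T.dist c₂ v + T.dist v b := conn.dist_triangle
            have t2 : T.dist c b ≤ T.dist c c₂ + T.dist c₂ b := conn.dist_triangle
            have hvb : T.dist v b = T.dist u b + 1 := by
              have := SimpleGraph.dist_comm (G := T) (u := b) (v := v)
              have := SimpleGraph.dist_comm (G := T) (u := b) (v := u)
              omega
            have : T.dist c c₂ = 1 := adj_dist hcc₂
            omega
          have hab' : T.dist a b + 1 = T.dist c b := by
            have := SimpleGraph.dist_comm (G := T) (u := b) (v := c)
            have := SimpleGraph.dist_comm (G := T) (u := b) (v := a)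
            omega
          have hac₂ := toward_unique hT hac.symm hcc₂ hab' hc₂b
          rw [← hac₂] at hc₂
          omega

/-- If a path starts by moving away from `q`, it keeps moving away. -/
private lemma tree_ascend (hT : T.IsTree) (q : V) :
    ∀ {c b : V} (p : T.Walk c b), p.IsPath → ∀ a, T.Adj a c → a ∉ p.support →
      T.dist q c = T.dist q a + 1 → T.dist q b = T.dist q c + p.length := by
  intro c b p
  induction p with
  | nil => intro _ a _ _ _; simp
  | @cons c c' b h' t ih =>
    intro hp a hac hnot hasc
    have hc' : T.dist q c' = T.dist q c + 1 := by
      rcases tree_dich hT h' q with hd | hd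
      · -- descending: c' towards q, so is a : contradiction with injectivity
        exfalso
        have e1 : T.dist c' q + 1 = T.dist c q := by
          have := SimpleGraph.dist_comm (G := T) (u := q) (v := c)
          have := SimpleGraph.dist_comm (G := T) (u := q) (v := c')
          omega
        have e2 : T.dist a q + 1 = T.dist c q := by
          have := SimpleGraph.dist_comm (G := T) (u := q) (v := c)
          have := SimpleGraph.dist_comm (G := T) (u := q) (v := a)
          omega
        have : c' = a := toward_unique hT h' hac.symm e1 e2
        apply hnot
        rw [← this]
        simp [Walk.support_cons]
      · omega
    have htp : t.IsPath := hp.of_cons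
    have hcnot : c ∉ t.support := by
      have := hp.support_nodup
      simp [Walk.support_cons] at this
      exact this.1
    have := ih htp c h' hcnot hc'
    simp only [Walk.length_cons]
    omega

/-- Along a path in a tree the distance to any vertex is maximised at an endpoint. -/
private lemma tree_max_end (hT : T.IsTree) (q : V) :
    ∀ {e₁ e₂ : V} (p : T.Walk e₁ e₂), p.IsPath → ∀ z ∈ p.support,
      T.dist q z ≤ max (T.dist q e₁) (T.dist q e₂) := by
  classical
  intro e₁ e₂ p
  induction p with
  | nil =>
    intro _ z hz
    simp at hz
    subst hz
    exact le_max_left _ _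
  | @cons e₁ c e₂ h' t ih =>
    intro hp z hz
    simp only [Walk.support_cons, List.mem_cons] at hz
    rcases hz with rfl | hz
    · exact le_max_left _ _
    · rcases tree_dich hT h' q with hd | hd
      · -- descending first step
        have := ih hp.of_cons z hz
        have hcc : T.dist q c ≤ T.dist q e₁ := by
          have := SimpleGraph.dist_comm (G := T) (u := q) (v := c)
          have := SimpleGraph.dist_comm (G := T) (u := q) (v := e₁)
          omega
        rcases le_max_iff.mp this with h1 | h1
        · exact le_max_iff.mpr (Or.inl (le_trans h1 hcc))
        · exact le_max_iff.mpr (Or.inr h1)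
      · -- ascending first step
        have he₁ : e₁ ∉ t.support := by
          have := hp.support_nodup
          simp [Walk.support_cons] at this
          exact this.1
        have hd' : T.dist q c = T.dist q e₁ + 1 := hd
        have hful := tree_ascend hT q t hp.of_cons e₁ h' he₁ hd'
        have htake := tree_ascend hT q (t.takeUntil z hz) (hp.of_cons.takeUntil hz) e₁ h'
          (fun hmem => he₁ (t.support_takeUntil_subset hz hmem)) hd'
        have hlen := t.length_takeUntil_le hz
        have : T.dist q z ≤ T.dist q e₂ := by omega
        exact le_max_iff.mpr (Or.inr this)

/-- A vertex between `e₁` and `e₂` lies on the path from `e₁` to `e₂`. -/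
private lemma tree_between_support (hT : T.IsTree) :
    ∀ {e₁ e₂ : V} (p : T.Walk e₁ e₂), p.IsPath → ∀ z,
      T.dist e₁ z + T.dist z e₂ = T.dist e₁ e₂ → z ∈ p.support := by
  have conn := hT.isConnected
  intro e₁ e₂ p
  induction p with
  | @nil e₁ =>
    intro _ z hz
    have h0 : T.dist e₁ e₁ = 0 := SimpleGraph.dist_self
    have h1 : T.dist e₁ z = 0 := by omega
    have := (conn.dist_eq_zero_iff).mp h1
    simp [← this]
  | @cons e₁ c e₂ h' t ih =>
    intro hp z hbtw
    by_cases hze : z = e₁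
    · simp [hze]
    · have hlen := tree_path_length hT _ hp
      have hlent := tree_path_length hT t hp.of_cons
      simp only [Walk.length_cons] at hlen
      -- d e₁ e₂ = d c e₂ + 1
      have hstep : T.dist e₁ e₂ = T.dist c e₂ + 1 := by omega
      have hzc : T.dist z e₁ = T.dist z c + 1 := by
        rcases tree_dich hT h' z with hd | hd
        · exact hd
        · -- z behind e₁ : contradiction
          exfalso
          have he₂c : T.dist e₂ e₁ = T.dist e₂ c + 1 := by
            have := SimpleGraph.dist_comm (G := T) (u := e₁) (v := e₂)
            have := SimpleGraph.dist_comm (G := T) (u := c) (v := e₂)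
            omega
          have hcross := tree_cross hT h' he₂c hd
          -- dist e₂ z = dist e₂ c + 1 + dist e₁ z
          have c1 := SimpleGraph.dist_comm (G := T) (u := e₂) (v := z)
          have c2 := SimpleGraph.dist_comm (G := T) (u := e₂) (v := c)
          have c3 := SimpleGraph.dist_comm (G := T) (u := e₁) (v := z)
          have hz0 : T.dist e₁ z ≠ 0 := by
            intro h0
            exact hze (((conn.dist_eq_zero_iff).mp h0).symm)
          omega
      have hbtw2 : T.dist c z + T.dist z e₂ = T.dist c e₂ := by
        have := SimpleGraph.dist_comm (G := T) (u := e₁) (v := z)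
        have := SimpleGraph.dist_comm (G := T) (u := c) (v := z)
        omega
      have := ih hp.of_cons z hbtw2
      simp [Walk.support_cons, this]

/-- A vertex between `e₁` and `e₂` is at distance from `q` at most the max of the ends. -/
private lemma tree_between_max (hT : T.IsTree) {e₁ e₂ z : V} (q : V)
    (h : T.dist e₁ z + T.dist z e₂ = T.dist e₁ e₂) :
    T.dist q z ≤ max (T.dist q e₁) (T.dist q e₂) := by
  obtain ⟨p, hp, _⟩ := hT.isConnected.exists_path_of_dist e₁ e₂
  exact tree_max_end hT q p hp z (tree_between_support hT p hp z h)

private lemma aut_adj (s : ↥T.autGroup) {a b : V} (h : T.Adj a b) :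
    T.Adj (s.val a) (s.val b) := (s.2 a b).mpr h

private lemma aut_dist (hT : T.IsTree) (s : ↥T.autGroup) (a b : V) :
    T.dist (s.val a) (s.val b) = T.dist a b := by
  have key : ∀ (s : ↥T.autGroup) (a b : V), T.dist (s.val a) (s.val b) ≤ T.dist a b := by
    intro s a b
    obtain ⟨p, hp⟩ := hT.isConnected.exists_walk_length_eq_dist a b
    let f : T →g T := ⟨s.val, fun h => (s.2 _ _).mpr h⟩
    calc T.dist (s.val a) (s.val b) ≤ (p.map f).length := SimpleGraph.dist_le _
    _ = p.length := by simp
    _ = T.dist a b := hp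
  refine le_antisymm (key s a b) ?_
  have := key s⁻¹ (s.val a) (s.val b)
  simpa using this

/-- Ray lemma: in a leafless set `S`, starting from an edge `(u,w)` with `w ∈ S`,
there are points of `S` behind `w`, arbitrarily far from `u`. -/
private lemma tree_ray (hT : T.IsTree) (S : Set V)
    (hnl : ∀ u ∈ S, ∃ w₁ w₂ : V, w₁ ≠ w₂ ∧ w₁ ∈ S ∧ w₂ ∈ S ∧ T.Adj u w₁ ∧ T.Adj u w₂)
    (k : ℕ) {u w : V} (huw : T.Adj u w) (hwS : w ∈ S) :
    ∃ z ∈ S, T.dist z u = T.dist z w + 1 ∧ k ≤ T.dist u z := by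
  induction k with
  | zero =>
    refine ⟨w, hwS, ?_, Nat.zero_le _⟩
    have h0 : T.dist w w = 0 := SimpleGraph.dist_self
    have h1 : T.dist w u = 1 := adj_dist huw.symm
    omega
  | succ k ih =>
    obtain ⟨z, hzS, hz, hk⟩ := ih
    obtain ⟨w₁, w₂, hne, hw₁S, hw₂S, ha₁, ha₂⟩ := hnl z hzS
    have huz : T.dist z u ≠ 0 := by omega
    -- at most one of w₁, w₂ is towards u
    have key : ∀ w' : V, T.Adj z w' → T.dist w' u = T.dist z u + 1 ∨
        (T.dist w' u + 1 = T.dist z u) := by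
      intro w' h
      have c1 := SimpleGraph.dist_comm (G := T) (u := u) (v := z)
      have c2 := SimpleGraph.dist_comm (G := T) (u := u) (v := w')
      rcases tree_dich hT h u with hd | hd
      · right; omega
      · left; omega
    have hpick : ∃ w', w' ∈ S ∧ T.Adj z w' ∧ T.dist w' u = T.dist z u + 1 := by
      rcases key w₁ ha₁ with h1 | h1
      · exact ⟨w₁, hw₁S, ha₁, h1⟩
      · rcases key w₂ ha₂ with h2 | h2
        · exact ⟨w₂, hw₂S, ha₂, h2⟩
        · exact absurd (toward_unique hT ha₁ ha₂ h1 h2) hne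
    obtain ⟨z', hz'S, haz', hz'⟩ := hpick
    refine ⟨z', hz'S, ?_, ?_⟩
    · -- z' is still behind w
      have c1 := SimpleGraph.dist_comm (G := T) (u := w) (v := z)
      have c2 := SimpleGraph.dist_comm (G := T) (u := w) (v := z')
      rcases tree_dich hT haz' w with hd | hd
      · -- dist z w = dist z' w + 1 : contradiction
        exfalso
        have t : T.dist z' u ≤ T.dist z' w + T.dist w u := hT.isConnected.dist_triangle
        have h1 : T.dist w u = 1 := adj_dist huw.symm
        omega
      · omega
    · have := SimpleGraph.dist_comm (G := T) (u := u) (v := z)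
      have := SimpleGraph.dist_comm (G := T) (u := u) (v := z')
      omega

/-- Hull-edge lemma: a hull point behind an edge is witnessed by a hull generator
at least as deep. -/
private lemma hull_edge (hT : T.IsTree) (E : Set V) {p q z : V}
    (hpq : T.Adj p q) (hz : T.dist z p = T.dist z q + 1)
    (hzS : z ∈ convexHullSet T E) :
    ∃ e ∈ E, T.dist e p = T.dist e q + 1 ∧ T.dist q z ≤ T.dist q e := by
  obtain ⟨e₁, he₁, e₂, he₂, hbtw⟩ := hzS
  have conn := hT.isConnected
  have czq := SimpleGraph.dist_comm (G := T) (u := z) (v := q)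
  have cpq := SimpleGraph.dist_comm (G := T) (u := p) (v := q)
  rcases tree_dich hT hpq e₁ with h1 | h1
  · rcases tree_dich hT hpq e₂ with h2 | h2
    · -- both inside : use the max lemma
      have := tree_between_max hT q hbtw
      rcases le_max_iff.mp this with h | h
      · exact ⟨e₁, he₁, h1, h⟩
      · exact ⟨e₂, he₂, h2, h⟩
    · -- e₁ inside, e₂ outside
      refine ⟨e₁, he₁, h1, ?_⟩
      have w1 := tree_cross hT hpq hz h2
      have w2 := tree_cross hT hpq h1 h2
      have c1 := SimpleGraph.dist_comm (G := T) (u := e₁) (v := z)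
      have c2 := SimpleGraph.dist_comm (G := T) (u := e₁) (v := q)
      omega
  · rcases tree_dich hT hpq e₂ with h2 | h2
    · -- e₁ outside, e₂ inside
      refine ⟨e₂, he₂, h2, ?_⟩
      have w1 := tree_cross hT hpq hz h1
      have w2 := tree_cross hT hpq h2 h1
      have c1 := SimpleGraph.dist_comm (G := T) (u := e₂) (v := z)
      have c2 := SimpleGraph.dist_comm (G := T) (u := e₂) (v := q)
      have c3 := SimpleGraph.dist_comm (G := T) (u := e₁) (v := z)
      have c4 := SimpleGraph.dist_comm (G := T) (u := e₁) (v := e₂)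
      omega
    · -- both outside : impossible
      exfalso
      have w1 := tree_cross hT hpq hz h1
      have w2 := tree_cross hT hpq hz h2
      have t : T.dist e₁ e₂ ≤ T.dist e₁ p + T.dist p e₂ := conn.dist_triangle
      have c1 := SimpleGraph.dist_comm (G := T) (u := e₁) (v := z)
      have c2 := SimpleGraph.dist_comm (G := T) (u := e₁) (v := p)
      omega

private lemma coe_mul_apply (s t : ↥T.autGroup) (a : V) :
    (s * t).val a = s.val (t.val a) := rfl


/-- Lemma: if the convex hull `S` of the `G`-orbit of the arc `(x,y)` has no leaves, then
for any nonempty bounded set `B` of vertices there is `g ∈ G` with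
`0 < d(g y, B) < d(g x, B)`. -/
theorem exists_translate_pointing_towards
    (T : SimpleGraph V) (hT : T.IsTree) (G : Subgroup ↥(T.autGroup))
    (x y : V) (hadj : T.Adj x y)
    (B : Set V) (hBne : B.Nonempty)
    (hbdd : ∃ n : ℕ, ∀ b₁ ∈ B, ∀ b₂ ∈ B, T.dist b₁ b₂ ≤ n)
    (hnoleaf : ∀ u ∈ convexHullSet T (orbitEnds T G x y),
      ∃ w₁ w₂ : V, w₁ ≠ w₂ ∧ w₁ ∈ convexHullSet T (orbitEnds T G x y) ∧
        w₂ ∈ convexHullSet T (orbitEnds T G x y) ∧ T.Adj u w₁ ∧ T.Adj u w₂) :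
    ∃ g ∈ G, 0 < sInf (T.dist (g.val y) '' B) ∧
      sInf (T.dist (g.val y) '' B) < sInf (T.dist (g.val x) '' B) := by
  classical
  obtain ⟨n, hn⟩ := hbdd
  obtain ⟨b₀, hb₀⟩ := id hBne
  have conn := hT.isConnected
  set E := orbitEnds T G x y with hE
  set S := convexHullSet T E with hS
  have hES : ∀ e ∈ E, e ∈ S := by
    intro e he
    refine ⟨e, he, e, he, ?_⟩
    simp [SimpleGraph.dist_self]
  have hyE : y ∈ E := Or.inr ⟨1, G.one_mem, rfl⟩
  by_contra hcon
  -- Good arc lemma: an arc pointing towards B from far away gives the conclusion.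
  have GA : ∀ g : ↥T.autGroup, g ∈ G → n + 1 ≤ T.dist b₀ (g.val y) →
      T.dist b₀ (g.val x) = T.dist b₀ (g.val y) + 1 → False := by
    intro g hg h1 h2
    apply hcon
    refine ⟨g, hg, ?_, ?_⟩
    · have hadj' : T.Adj (g.val x) (g.val y) := aut_adj g hadj
      obtain ⟨b1, hb1, hb1'⟩ := Nat.sInf_mem (hBne.image (T.dist (g.val y)))
      rw [← hb1']
      have hpos : 1 ≤ T.dist b1 (g.val y) := by
        have t : T.dist b₀ (g.val y) ≤ T.dist b₀ b1 + T.dist b1 (g.val y) :=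
          conn.dist_triangle
        have := hn b₀ hb₀ b1 hb1
        omega
      have := SimpleGraph.dist_comm (G := T) (u := g.val y) (v := b1)
      omega
    · have hadj' : T.Adj (g.val x) (g.val y) := aut_adj g hadj
      obtain ⟨b2, hb2, hb2'⟩ := Nat.sInf_mem (hBne.image (T.dist (g.val x)))
      have hside : T.dist b2 (g.val x) = T.dist b2 (g.val y) + 1 := by
        rcases tree_dich hT hadj' b2 with hd | hd
        · exact hd
        · exfalso
          have w := tree_cross hT hadj' h2 hd
          have := hn b₀ hb₀ b2 hb2
          omega
      have hle : sInf (T.dist (g.val y) '' B) ≤ T.dist (g.val y) b2 :=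
        Nat.sInf_le ⟨b2, hb2, rfl⟩
      have c1 := SimpleGraph.dist_comm (G := T) (u := g.val y) (v := b2)
      have c2 := SimpleGraph.dist_comm (G := T) (u := g.val x) (v := b2)
      omega
  -- Under the contradiction hypothesis, all far arcs point away from b₀.
  have H' : ∀ g : ↥T.autGroup, g ∈ G → n + 2 ≤ T.dist b₀ (g.val x) →
      T.dist b₀ (g.val y) = T.dist b₀ (g.val x) + 1 := by
    intro g hg hfar
    have hadj' : T.Adj (g.val x) (g.val y) := aut_adj g hadj
    rcases tree_dich hT hadj' b₀ with hd | hd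
    · exact absurd (GA g hg (by omega) hd) id
    · exact hd
  -- Step A : find a far arc
  obtain ⟨z₁, hz₁S, hz₁, hz₁k⟩ :=
    tree_ray hT S hnoleaf (T.dist b₀ y + n + 4) hadj (hES y hyE)
  obtain ⟨e, heE, heside, hedeep⟩ := hull_edge hT E hadj hz₁ hz₁S
  have hyz₁ : T.dist b₀ y + n + 3 ≤ T.dist y z₁ := by
    have c1 := SimpleGraph.dist_comm (G := T) (u := x) (v := z₁)
    have c2 := SimpleGraph.dist_comm (G := T) (u := y) (v := z₁)
    omega
  have heb₀ : n + 3 ≤ T.dist b₀ e := by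
    have t : T.dist y e ≤ T.dist y b₀ + T.dist b₀ e := conn.dist_triangle
    have c := SimpleGraph.dist_comm (G := T) (u := b₀) (v := y)
    omega
  obtain ⟨g₁, hg₁, hfar₁⟩ :
      ∃ g₁ : ↥T.autGroup, g₁ ∈ G ∧ n + 2 ≤ T.dist b₀ (g₁.val x) := by
    rcases heE with ⟨g₁, hg₁, hg₁e⟩ | ⟨g₁, hg₁, hg₁e⟩
    · exact ⟨g₁, hg₁, by rw [hg₁e]; omega⟩
    · refine ⟨g₁, hg₁, ?_⟩
      have hadj₁ : T.Adj (g₁.val x) (g₁.val y) := aut_adj g₁ hadj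
      have t : T.dist b₀ (g₁.val y) ≤ T.dist b₀ (g₁.val x) +
          T.dist (g₁.val x) (g₁.val y) := conn.dist_triangle
      have hone := adj_dist hadj₁
      rw [hg₁e] at t hone
      omega
  set u₁ := g₁.val x with hu₁
  set v₁ := g₁.val y with hv₁
  have hadj₁ : T.Adj u₁ v₁ := aut_adj g₁ hadj
  have hor₁ : T.dist b₀ v₁ = T.dist b₀ u₁ + 1 := H' g₁ hg₁ hfar₁
  have hv₁E : v₁ ∈ E := Or.inr ⟨g₁, hg₁, rfl⟩
  -- Step B : find a deep arc behind v₁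
  obtain ⟨z₂, hz₂S, hz₂, hz₂k⟩ := tree_ray hT S hnoleaf 4 hadj₁ (hES v₁ hv₁E)
  obtain ⟨e', he'E, he'side, he'deep⟩ := hull_edge hT E hadj₁ hz₂ hz₂S
  have he'3 : 3 ≤ T.dist v₁ e' := by
    have c1 := SimpleGraph.dist_comm (G := T) (u := u₁) (v := z₂)
    have c2 := SimpleGraph.dist_comm (G := T) (u := v₁) (v := z₂)
    omega
  -- both ends of the arc of e' are behind v₁, at depth ≥ 2
  obtain ⟨g₂, hg₂, hu₂side, hv₂side, hu₂deep, hv₂deep⟩ :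
      ∃ g₂ : ↥T.autGroup, g₂ ∈ G ∧
        T.dist (g₂.val x) u₁ = T.dist (g₂.val x) v₁ + 1 ∧
        T.dist (g₂.val y) u₁ = T.dist (g₂.val y) v₁ + 1 ∧
        2 ≤ T.dist v₁ (g₂.val x) ∧ 2 ≤ T.dist v₁ (g₂.val y) := by
    rcases he'E with ⟨g₂, hg₂, hg₂e⟩ | ⟨g₂, hg₂, hg₂e⟩
    · -- e' = g₂ x
      have hadj₂ : T.Adj (g₂.val x) (g₂.val y) := aut_adj g₂ hadj
      have hxside : T.dist (g₂.val x) u₁ = T.dist (g₂.val x) v₁ + 1 := by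
        rw [hg₂e]; exact he'side
      have hxdeep : 3 ≤ T.dist v₁ (g₂.val x) := by rw [hg₂e]; exact he'3
      have hcx := SimpleGraph.dist_comm (G := T) (u := v₁) (v := g₂.val x)
      have hyside : T.dist (g₂.val y) u₁ = T.dist (g₂.val y) v₁ + 1 := by
        rcases tree_dich hT hadj₁ (g₂.val y) with hd | hd
        · exact hd
        · exfalso
          have w := tree_cross hT hadj₁ hxside hd
          have h1 := adj_dist hadj₂
          omega
      have t : T.dist v₁ (g₂.val x) ≤ T.dist v₁ (g₂.val y) +
          T.dist (g₂.val y) (g₂.val x) := conn.dist_triangle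
      have := adj_dist hadj₂.symm
      exact ⟨g₂, hg₂, hxside, hyside, by omega, by omega⟩
    · -- e' = g₂ y
      have hadj₂ : T.Adj (g₂.val x) (g₂.val y) := aut_adj g₂ hadj
      have hyside : T.dist (g₂.val y) u₁ = T.dist (g₂.val y) v₁ + 1 := by
        rw [hg₂e]; exact he'side
      have hydeep : 3 ≤ T.dist v₁ (g₂.val y) := by rw [hg₂e]; exact he'3
      have hcy := SimpleGraph.dist_comm (G := T) (u := v₁) (v := g₂.val y)
      have hxside : T.dist (g₂.val x) u₁ = T.dist (g₂.val x) v₁ + 1 := by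
        rcases tree_dich hT hadj₁ (g₂.val x) with hd | hd
        · exact hd
        · exfalso
          have w := tree_cross hT hadj₁ hyside hd
          have h1 := adj_dist hadj₂.symm
          omega
      have t : T.dist v₁ (g₂.val y) ≤ T.dist v₁ (g₂.val x) +
          T.dist (g₂.val x) (g₂.val y) := conn.dist_triangle
      have := adj_dist hadj₂
      exact ⟨g₂, hg₂, hxside, hyside, by omega, by omega⟩
  set u₂ := g₂.val x with hu₂
  set v₂ := g₂.val y with hv₂
  have hadj₂ : T.Adj u₂ v₂ := aut_adj g₂ hadj
  -- the arc (u₂,v₂) is far from b₀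
  have wu₂ : T.dist u₂ b₀ = T.dist u₂ v₁ + 1 + T.dist u₁ b₀ :=
    tree_cross hT hadj₁ hu₂side hor₁
  have wv₂ : T.dist v₂ b₀ = T.dist v₂ v₁ + 1 + T.dist u₁ b₀ :=
    tree_cross hT hadj₁ hv₂side hor₁
  have hfar₂ : n + 2 ≤ T.dist b₀ u₂ := by
    have c1 := SimpleGraph.dist_comm (G := T) (u := b₀) (v := u₂)
    have c2 := SimpleGraph.dist_comm (G := T) (u := b₀) (v := u₁)
    omega
  have hor₂ : T.dist b₀ v₂ = T.dist b₀ u₂ + 1 := H' g₂ hg₂ hfar₂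
  -- orientation : v₂ is deeper than u₂ behind v₁
  have worient : T.dist v₁ v₂ = T.dist v₁ u₂ + 1 := by
    have c1 := SimpleGraph.dist_comm (G := T) (u := b₀) (v := u₂)
    have c2 := SimpleGraph.dist_comm (G := T) (u := b₀) (v := v₂)
    have c3 := SimpleGraph.dist_comm (G := T) (u := v₁) (v := u₂)
    have c4 := SimpleGraph.dist_comm (G := T) (u := v₁) (v := v₂)
    omega
  -- containment of half-trees
  have Binc : ∀ w' : V, T.dist w' u₂ = T.dist w' v₂ + 1 →
      T.dist w' u₁ = T.dist w' v₁ + 1 := by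
    intro w' hw'
    rcases tree_dich hT hadj₁ w' with hd | hd
    · exact hd
    · exfalso
      have wa := tree_cross hT hadj₁ hv₂side hd
      have wb := tree_cross hT hadj₁ hu₂side hd
      have c1 := SimpleGraph.dist_comm (G := T) (u := w') (v := u₂)
      have c2 := SimpleGraph.dist_comm (G := T) (u := w') (v := v₂)
      have c3 := SimpleGraph.dist_comm (G := T) (u := v₁) (v := u₂)
      have c4 := SimpleGraph.dist_comm (G := T) (u := v₁) (v := v₂)
      omega
  -- the translation
  set τ : ↥T.autGroup := g₁ * g₂⁻¹ with hτ
  have hτG : τ ∈ G := G.mul_mem hg₁ (G.inv_mem hg₂)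
  have hτu : τ.val u₂ = u₁ := by
    show (g₁ * g₂⁻¹).val (g₂.val x) = g₁.val x
    rw [coe_mul_apply]
    congr 1
    simp
  have hτv : τ.val v₂ = v₁ := by
    show (g₁ * g₂⁻¹).val (g₂.val y) = g₁.val y
    rw [coe_mul_apply]
    congr 1
    simp
  have hsucc : ∀ (k : ℕ) (a : V), (τ^(k+1)).val a = (τ^k).val (τ.val a) := by
    intro k a
    rw [pow_succ]
    rfl
  have hadjk : ∀ k : ℕ, T.Adj ((τ^k).val u₂) ((τ^k).val v₂) := fun k => aut_adj _ hadj₂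
  -- the half-trees are increasing
  have A3 : ∀ (k : ℕ) (w' : V), T.dist w' ((τ^k).val u₂) = T.dist w' ((τ^k).val v₂) + 1 →
      T.dist w' ((τ^(k+1)).val u₂) = T.dist w' ((τ^(k+1)).val v₂) + 1 := by
    intro k w' hw'
    have hwrep : (τ^k).val (((τ^k)⁻¹).val w') = w' := by simp
    have e1 := aut_dist hT (τ^k) (((τ^k)⁻¹).val w') u₂
    have e2 := aut_dist hT (τ^k) (((τ^k)⁻¹).val w') v₂
    rw [hwrep] at e1 e2
    have h2 := Binc (((τ^k)⁻¹).val w') (by omega)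
    have e3 := aut_dist hT (τ^k) (((τ^k)⁻¹).val w') u₁
    have e4 := aut_dist hT (τ^k) (((τ^k)⁻¹).val w') v₁
    rw [hwrep] at e3 e4
    rw [hsucc k u₂, hsucc k v₂, hτu, hτv]
    omega
  have memW : ∀ k : ℕ, T.dist v₂ ((τ^k).val u₂) = T.dist v₂ ((τ^k).val v₂) + 1 := by
    intro k
    induction k with
    | zero =>
      have h1 := adj_dist hadj₂
      have c1 := SimpleGraph.dist_comm (G := T) (u := u₂) (v := v₂)
      have h0 : T.dist v₂ v₂ = 0 := SimpleGraph.dist_self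
      simp only [pow_zero]
      show T.dist v₂ ((1 : Equiv.Perm V) u₂) = T.dist v₂ ((1 : Equiv.Perm V) v₂) + 1
      simp only [Equiv.Perm.one_apply]
      omega
    | succ k ih => exact A3 k v₂ ih
  have Vnotin : ∀ k : ℕ, T.dist ((τ^(k+1)).val v₂) ((τ^k).val v₂) =
      T.dist ((τ^(k+1)).val v₂) ((τ^k).val u₂) + 1 := by
    intro k
    rw [hsucc k v₂, hτv]
    have e1 := aut_dist hT (τ^k) v₁ v₂
    have e2 := aut_dist hT (τ^k) v₁ u₂
    rw [e1, e2]
    omega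
  have growth : ∀ k : ℕ, 2*k ≤ T.dist v₂ ((τ^k).val v₂) := by
    intro k
    induction k with
    | zero => simp
    | succ k ih =>
      have w := tree_cross hT (hadjk k) (memW k) (Vnotin k)
      have e1 : T.dist ((τ^(k+1)).val v₂) ((τ^k).val v₂) = T.dist v₁ v₂ := by
        rw [hsucc k v₂, hτv]; exact aut_dist hT (τ^k) v₁ v₂
      have c1 := SimpleGraph.dist_comm (G := T) (u := (τ^k).val u₂) (v := (τ^(k+1)).val v₂)
      have c2 := SimpleGraph.dist_comm (G := T) (u := v₁) (v := v₂)
      have c3 := SimpleGraph.dist_comm (G := T) (u := v₂) (v := (τ^(k+1)).val v₂)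
      have hVn := Vnotin k
      omega
  -- b₀ enters the half-trees
  set K := T.dist v₂ b₀ with hK
  have enter : T.dist b₀ ((τ^K).val u₂) = T.dist b₀ ((τ^K).val v₂) + 1 := by
    rcases tree_dich hT (hadjk K) b₀ with hd | hd
    · exact hd
    · exfalso
      have w := tree_cross hT (hadjk K) (memW K) hd
      have hg := growth K
      omega
  have mono : ∀ j : ℕ, T.dist b₀ ((τ^(K+j)).val u₂) = T.dist b₀ ((τ^(K+j)).val v₂) + 1 := by
    intro j
    induction j with
    | zero => exact enter
    | succ j ih => exact A3 (K+j) b₀ ih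
  -- conclude
  set m := K + (n + 2) with hm
  have hgrow := growth m
  have t : T.dist v₂ ((τ^m).val v₂) ≤ T.dist v₂ b₀ + T.dist b₀ ((τ^m).val v₂) :=
    conn.dist_triangle
  have hfarm : n + 1 ≤ T.dist b₀ ((τ^m).val v₂) := by omega
  have hmem : τ^m * g₂ ∈ G := G.mul_mem (pow_mem hτG m) hg₂
  have hgy : (τ^m * g₂).val y = (τ^m).val v₂ := by rw [coe_mul_apply, ← hv₂]
  have hgx : (τ^m * g₂).val x = (τ^m).val u₂ := by rw [coe_mul_apply, ← hu₂]
  exact GA (τ^m * g₂) hmem (by rw [hgy]; exact hfarm) (by rw [hgx, hgy]; exact mono (n+2))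
end

section
/- Let T be a tree and let O be a strongly confluent partial orientation of T such that every vertex has an outgoing arc in O. Then: (a) O is a full orientation of T: for every arc (u,v), exactly one of (u,v), (v,u) lies in O; (b) for every vertex v the forward orbit v, f_O(v), f_O²(v), … is injective; and (c) any two forward orbits merge: for all vertices v, w there exist m, n ≥ 0 with f_O^m(v) = f_O^n(w). (Thus O orients every arc of T toward a single end of T.) -/
open SimpleGraph

variable {V : Type*}

/-- A strongly confluent partial orientation (s.c.p.o.) of a simple graph `Γ`: a set `O` of
arcs (ordered pairs of adjacent vertices) such that (i) `O` never contains both an arc and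
its reverse; (ii) at most one arc of `O` originates at each vertex; (iii) if some arc of
`O` originates at `v`, then every edge incident with `v` is oriented by `O`. -/
def IsSCPO (Γ : SimpleGraph V) (O : Set (V × V)) : Prop :=
  (∀ p ∈ O, Γ.Adj p.1 p.2) ∧
  (∀ u v : V, (u, v) ∈ O → (v, u) ∉ O) ∧
  (∀ v u u' : V, (v, u) ∈ O → (v, u') ∈ O → u = u') ∧
  (∀ v u : V, (v, u) ∈ O → ∀ w : V, Γ.Adj v w → ((v, w) ∈ O ∨ (w, v) ∈ O))

/-- The map associated with a confluent partial orientation: `fO O v` is the terminus of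
the arc of `O` originating at `v` if there is one, and `v` otherwise. -/
noncomputable def fO (O : Set (V × V)) (v : V) : V :=
  haveI := Classical.propDecidable (∃ w : V, (v, w) ∈ O)
  if h : ∃ w : V, (v, w) ∈ O then h.choose else v

/-!
Every vertex `v` of the tree is joined to `f v`, and `f (f v) ≠ v` because `O` contains no
arc together with its reverse. Hence the orbit walk `v, f v, f² v, …` never backtracks, and a
non-backtracking walk in an acyclic graph is a path, so orbits are injective. Every edge `uv`
is oriented by `O`, i.e. `f u = v` or `f v = u`; either way the orbits of `u` and `v` merge,
and following a path in the tree the orbits of any two vertices merge.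
-/

namespace SimpleGraph

variable {G : SimpleGraph V} {f : V → V}

noncomputable def orbitWalk (hf : ∀ v, G.Adj v (f v)) (x : V) : (n : ℕ) → G.Walk x (f^[n] x)
  | 0 => .nil
  | n + 1 => .cons (hf x) (orbitWalk hf (f x) n)

theorem length_orbitWalk (hf : ∀ v, G.Adj v (f v)) (x : V) (n : ℕ) :
    (orbitWalk hf x n).length = n := by
  induction n generalizing x with
  | zero => rfl
  | succ n ih => simp [orbitWalk, ih]

theorem getVert_orbitWalk (hf : ∀ v, G.Adj v (f v)) (x : V) {n i : ℕ} (hi : i ≤ n) :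
    (orbitWalk hf x n).getVert i = f^[i] x := by
  induction n generalizing x i with
  | zero => simp [Nat.le_zero.mp hi, orbitWalk]
  | succ n ih =>
    cases i with
    | zero => exact Walk.getVert_zero _
    | succ i => simp [orbitWalk, ih (f x) (Nat.le_of_succ_le_succ hi)]

theorem IsAcyclic.isPath_orbitWalk (hG : G.IsAcyclic) (hf : ∀ v, G.Adj v (f v))
    (hff : ∀ v, f (f v) ≠ v) (x : V) (n : ℕ) : (orbitWalk hf x n).IsPath := by
  rw [hG.isPath_iff_isChain]
  induction n generalizing x with
  | zero => simp [orbitWalk]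
  | succ n ih =>
    cases n with
    | zero => simp [orbitWalk]
    | succ n =>
      simp only [orbitWalk] at ih ⊢
      refine List.isChain_cons_cons.mpr ⟨?_, ih (f x)⟩
      simp [(hf x).ne, (hff x).symm]

theorem IsAcyclic.injective_iterate_apply (hG : G.IsAcyclic) (hf : ∀ v, G.Adj v (f v))
    (hff : ∀ v, f (f v) ≠ v) (x : V) : Function.Injective (fun n : ℕ => f^[n] x) := by
  intro i j hij
  have hpath := hG.isPath_orbitWalk hf hff x (i + j)
  refine hpath.getVert_injOn (by simp [length_orbitWalk]) (by simp [length_orbitWalk]) ?_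
  simpa [getVert_orbitWalk] using hij

theorem Reachable.exists_iterate_eq_iterate (horient : ∀ u v, G.Adj u v → f u = v ∨ f v = u)
    {a b : V} (h : G.Reachable a b) : ∃ m n : ℕ, f^[m] a = f^[n] b := by
  obtain ⟨p⟩ := h
  induction p with
  | nil => exact ⟨0, 0, rfl⟩
  | @cons a b c hab p ih =>
    obtain ⟨m, n, hmn⟩ := ih
    rcases horient a b hab with hfa | hfb
    · exact ⟨m + 1, n, by rw [Function.iterate_succ_apply, hfa, hmn]⟩
    · refine ⟨m, n + 1, ?_⟩
      rw [← hfb, ← Function.iterate_succ_apply, Function.iterate_succ_apply',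
        Function.iterate_succ_apply', hmn]

end SimpleGraph

theorem fO_mem {O : Set (V × V)} {v : V} (h : ∃ w, (v, w) ∈ O) : (v, fO O v) ∈ O := by
  rw [fO, dif_pos h]
  exact h.choose_spec

namespace IsSCPO

variable {Γ : SimpleGraph V} {O : Set (V × V)}

theorem fO_eq (hO : IsSCPO Γ O) {v w : V} (h : (v, w) ∈ O) : fO O v = w :=
  hO.2.2.1 v _ w (fO_mem ⟨w, h⟩) h

theorem mem_iff_swap_not_mem (hO : IsSCPO Γ O) {u v : V} (hv : ∃ w, (v, w) ∈ O)
    (huv : Γ.Adj u v) : (u, v) ∈ O ↔ (v, u) ∉ O := by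
  refine ⟨hO.2.1 u v, fun hvu => ?_⟩
  obtain ⟨w, hw⟩ := hv
  exact (hO.2.2.2 v w hw u huv.symm).resolve_left hvu

theorem fO_eq_or_fO_eq (hO : IsSCPO Γ O) {u v : V} (hu : ∃ w, (u, w) ∈ O)
    (huv : Γ.Adj u v) : fO O u = v ∨ fO O v = u := by
  obtain ⟨w, hw⟩ := hu
  exact (hO.2.2.2 u w hw v huv).imp hO.fO_eq hO.fO_eq

end IsSCPO

/-- Theorem: a strongly confluent partial orientation `O` of a tree `T` in which every
vertex has an outgoing arc is a full orientation, every forward `f_O`-orbit is injective,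
and any two forward orbits merge (so `O` points towards a single end of `T`). -/
theorem scpo_without_sinks
    (T : SimpleGraph V) (hT : T.IsTree) (O : Set (V × V)) (hO : IsSCPO T O)
    (hfull : ∀ v : V, ∃ w : V, (v, w) ∈ O) :
    (∀ u v : V, T.Adj u v → ((u, v) ∈ O ↔ (v, u) ∉ O)) ∧
    (∀ v : V, Function.Injective (fun n : ℕ => (fO O)^[n] v)) ∧
    (∀ v w : V, ∃ m n : ℕ, (fO O)^[m] v = (fO O)^[n] w) := by
  have hmem (v : V) : (v, fO O v) ∈ O := fO_mem (hfull v)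
  have hadj (v : V) : T.Adj v (fO O v) := hO.1 _ (hmem v)
  have hff (v : V) : fO O (fO O v) ≠ v := fun h =>
    hO.2.1 _ _ (hmem v) (by simpa [h] using hmem (fO O v))
  refine ⟨fun u v => hO.mem_iff_swap_not_mem (hfull v),
    hT.isAcyclic.injective_iterate_apply hadj hff, fun v w => ?_⟩
  exact (hT.connected v w).exists_iterate_eq_iterate fun u v => hO.fO_eq_or_fO_eq (hfull u)
end
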